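/- arXiv:math/0512285 — 8 statements merged into one kernel-verified Lean document; each statement's English description precedes it below -/
import Mathlib

section
/- Let $P \subset \mathbb{Z}^r$ be a finite set of exponent vectors and let $\overline{P} = \{\bar{u} : u \in P\}$ where $\bar{u}$ denotes the componentwise reduction of $u$ modulo $q-1$ into $\{0,\ldots,q-2\}^r$. Then the $\mathbb{F}_q$-linear code generated by the evaluation vectors $\{(t^u)_{t \in (\mathbb{F}_q^\ast)^r} : u \in P\}$ has dimension exactly $\#\overline{P}$. -/
open Finset

/-- The monomial character `t ↦ ∏ i, (t i)^(w i)` as a monoid hom into `F`. -/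
def toricChar {F : Type*} [Field F] {r : ℕ} (w : Fin r → ℕ) : (Fin r → Fˣ) →* F where
  toFun t := ((∏ i, (t i) ^ (w i) : Fˣ) : F)
  map_one' := by simp
  map_mul' x y := by
    push_cast
    rw [← Finset.prod_mul_distrib]
    simp [mul_pow]

lemma units_zpow_reduce {F : Type*} [Field F] [Fintype F] [DecidableEq F] (a : Fˣ) (u : ℤ) :
    a ^ u = a ^ ((u % ((Fintype.card F : ℤ) - 1)).toNat) := by
  have hq : 1 ≤ Fintype.card F := Fintype.card_pos
  set m : ℤ := (Fintype.card F : ℤ) - 1 with hm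
  have hm0 : 0 < m := by
    have : 1 < Fintype.card F := Fintype.one_lt_card
    omega
  have ham : a ^ m = 1 := by
    have h1 : a ^ (Fintype.card Fˣ) = 1 := pow_card_eq_one
    have h2 : ((Fintype.card Fˣ : ℕ) : ℤ) = m := by
      rw [Fintype.card_units, hm]
      push_cast [Nat.cast_sub hq]
      ring
    calc a ^ m = a ^ ((Fintype.card Fˣ : ℕ) : ℤ) := by rw [h2]
    _ = a ^ (Fintype.card Fˣ) := zpow_natCast a _
    _ = 1 := h1
  have hmod : (((u % m).toNat : ℤ)) = u % m :=
    Int.toNat_of_nonneg (Int.emod_nonneg u hm0.ne')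
  calc a ^ u = a ^ (m * (u / m) + u % m) := by rw [Int.mul_ediv_add_emod u m]
  _ = (a ^ m) ^ (u / m) * a ^ (u % m) := by rw [zpow_add, zpow_mul]
  _ = a ^ (u % m) := by rw [ham, one_zpow, one_mul]
  _ = a ^ ((u % m).toNat) := by rw [← zpow_natCast, hmod]

lemma toricChar_inj {F : Type*} [Field F] [Fintype F] [DecidableEq F] {r : ℕ} {w v : Fin r → ℕ}
    (hw : ∀ i, w i < Fintype.card F - 1) (hv : ∀ i, v i < Fintype.card F - 1)
    (h : toricChar (F := F) w = toricChar (F := F) v) : w = v := by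
  obtain ⟨g, hg⟩ := IsCyclic.exists_generator (α := Fˣ)
  have hord : orderOf g = Fintype.card F - 1 := by
    rw [orderOf_eq_card_of_forall_mem_zpowers hg, Nat.card_eq_fintype_card,
      Fintype.card_units]
  funext i
  have heval : ∀ (u : Fin r → ℕ),
      toricChar (F := F) u (Function.update 1 i g) = ((g ^ u i : Fˣ) : F) := by
    intro u
    simp only [toricChar, MonoidHom.coe_mk, OneHom.coe_mk]
    congr 1
    rw [Finset.prod_eq_single i]
    · rw [Function.update_self]
    · intro j _ hj
      rw [Function.update_of_ne hj]
      simp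
    · simp
  have h2 : ((g ^ w i : Fˣ) : F) = ((g ^ v i : Fˣ) : F) := by
    rw [← heval w, ← heval v, h]
  have h3 : (g : Fˣ) ^ w i = g ^ v i := Units.ext h2
  have := pow_injOn_Iio_orderOf (x := g)
    (by rw [hord]; exact Set.mem_Iio.2 (hw i))
    (by rw [hord]; exact Set.mem_Iio.2 (hv i)) h3
  exact this

/-- The toric code generated by evaluation vectors of `u ∈ P` has dimension
equal to the cardinality of the componentwise reduction of `P` mod `q-1`. -/
theorem toric_code_dimension {F : Type*} [Field F] [Fintype F] [DecidableEq F] {r : ℕ}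
    (hr : 1 ≤ r) (P : Finset (Fin r → ℤ)) :
    Module.finrank F (Submodule.span F
      ((fun u : Fin r → ℤ => (fun t : Fin r → Fˣ => ((∏ i, (t i) ^ (u i) : Fˣ) : F))) '' P)) =
    (P.image (fun u => fun i => (u i % ((Fintype.card F : ℤ) - 1)).toNat)).card := by
  classical
  set red : (Fin r → ℤ) → (Fin r → ℕ) :=
    fun u i => (u i % ((Fintype.card F : ℤ) - 1)).toNat with hred
  set Q : Finset (Fin r → ℕ) := P.image red with hQ
  have hchar : ∀ u : Fin r → ℤ,
      (fun t : Fin r → Fˣ => ((∏ i, (t i) ^ (u i) : Fˣ) : F)) = ⇑(toricChar (F := F) (red u)) := by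
    intro u
    funext t
    simp only [toricChar, MonoidHom.coe_mk, OneHom.coe_mk, hred]
    congr 1
    exact Finset.prod_congr rfl fun i _ => units_zpow_reduce (t i) (u i)
  have hQlt : ∀ w ∈ Q, ∀ i, w i < Fintype.card F - 1 := by
    intro w hw i
    obtain ⟨u, _, rfl⟩ := Finset.mem_image.1 hw
    have h1 : 1 < Fintype.card F := Fintype.one_lt_card
    have hm0 : (0 : ℤ) < (Fintype.card F : ℤ) - 1 := by
      have : (1 : ℤ) < Fintype.card F := by exact_mod_cast h1
      omega
    have := Int.emod_lt_of_pos (u i) hm0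
    simp only [hred]
    omega
  -- injectivity of w ↦ toricChar w on Q
  have hinj : Function.Injective
      (fun w : ↑Q => toricChar (F := F) (w : Fin r → ℕ)) := by
    rintro ⟨w, hw⟩ ⟨v, hv⟩ h
    exact Subtype.ext (toricChar_inj (hQlt w hw) (hQlt v hv) h)
  have hli : LinearIndependent F
      (fun w : ↑Q => ⇑(toricChar (F := F) (w : Fin r → ℕ))) :=
    (linearIndependent_monoidHom (Fin r → Fˣ) F).comp _ hinj
  have hset : ((fun u : Fin r → ℤ =>
      (fun t : Fin r → Fˣ => ((∏ i, (t i) ^ (u i) : Fˣ) : F))) '' ↑P) =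
      Set.range (fun w : ↑Q => ⇑(toricChar (F := F) (w : Fin r → ℕ))) := by
    ext f
    constructor
    · rintro ⟨u, hu, rfl⟩
      exact ⟨⟨red u, Finset.mem_image_of_mem red hu⟩, (hchar u).symm⟩
    · rintro ⟨⟨w, hw⟩, rfl⟩
      obtain ⟨u, hu, rfl⟩ := Finset.mem_image.1 hw
      exact ⟨u, hu, hchar u⟩
  rw [hset, finrank_span_eq_card hli, Fintype.card_coe]
end

section
/- The evaluation map from the span of monomials with exponents in $P \cap \mathbb{Z}^r$ to $\mathbb{F}_q^{(q-1)^r}$ is injective if and only if the componentwise reduction modulo $q-1$ into $\{0,\ldots,q-2\}^r$ is injective on $P \cap \mathbb{Z}^r$. -/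
/-- Monomial character attached to an exponent vector. -/
def monChar {F : Type*} [Field F] {r : ℕ} (u : Fin r → ℕ) :
    (Fin r → Fˣ) →* F where
  toFun t := ∏ i, ((t i : F)) ^ (u i)
  map_one' := by simp
  map_mul' s t := by simp [mul_pow, Finset.prod_mul_distrib]

/-- The evaluation map is injective iff componentwise reduction mod `q-1` is
injective on the exponent set `P`. -/
theorem evaluation_injective_iff {F : Type*} [Field F] [Fintype F] {r : ℕ}
    (hr : 1 ≤ r) (P : Finset (Fin r → ℕ))
    (ev : (P → F) →ₗ[F] ((Fin r → Fˣ) → F))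
    (hev : ∀ (lam : P → F) (t : Fin r → Fˣ),
      ev lam t = ∑ u : P, lam u * ∏ i, ((t i : F)) ^ ((u : Fin r → ℕ) i)) :
    Function.Injective ev ↔
      Set.InjOn (fun u : Fin r → ℕ => fun i => u i % (Fintype.card F - 1)) ↑P := by
  classical
  set c := Fintype.card F - 1 with hc
  constructor
  · -- injective ev → InjOn
    intro hinj u hu v hv hmod
    by_contra hne
    set a : P := ⟨u, hu⟩
    set b : P := ⟨v, hv⟩
    have hab : a ≠ b := fun h => hne (congrArg Subtype.val h)
    set lam : P → F := Pi.single a 1 - Pi.single b 1 with hlam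
    have hchar : ∀ t : Fin r → Fˣ,
        (∏ i, ((t i : F)) ^ (u i)) = ∏ i, ((t i : F)) ^ (v i) := by
      intro t
      have key : ∀ i, ((t i : F)) ^ (u i) = ((t i : F)) ^ (v i) := by
        intro i
        have h1 : ((t i : F)) ^ c = 1 :=
          FiniteField.pow_card_sub_one_eq_one _ (t i).ne_zero
        calc ((t i : F)) ^ (u i) = ((t i : F)) ^ (u i % c) := pow_eq_pow_mod _ h1
          _ = ((t i : F)) ^ (v i % c) := by
            rw [show u i % c = v i % c from congrFun hmod i]
          _ = ((t i : F)) ^ (v i) := (pow_eq_pow_mod _ h1).symm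
      exact Finset.prod_congr rfl fun i _ => key i
    have hev0 : ev lam = 0 := by
      funext t
      rw [hev]
      have : ∀ w : P, lam w * ∏ i, ((t i : F)) ^ ((w : Fin r → ℕ) i)
          = (Pi.single a 1 : P → F) w * ∏ i, ((t i : F)) ^ ((w : Fin r → ℕ) i)
            - (Pi.single b 1 : P → F) w * ∏ i, ((t i : F)) ^ ((w : Fin r → ℕ) i) := by
        intro w; simp [hlam, sub_mul]
      rw [Finset.sum_congr rfl fun w _ => this w, Finset.sum_sub_distrib]
      have hs : ∀ (z : P), ∑ w : P, (Pi.single z 1 : P → F) w *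
          ∏ i, ((t i : F)) ^ ((w : Fin r → ℕ) i)
          = ∏ i, ((t i : F)) ^ ((z : Fin r → ℕ) i) := by
        intro z
        rw [Finset.sum_eq_single z]
        · simp
        · intro w _ hw; simp [Pi.single_apply, hw]
        · simp
      rw [hs a, hs b]
      simpa using sub_eq_zero.mpr (hchar t)
    have : lam = 0 := hinj (by simpa using hev0)
    have : lam a = 0 := congrFun this a
    simp [hlam, Pi.single_apply, hab] at this
  · -- InjOn → injective ev
    intro hinjon
    have hker : ∀ lam : P → F, ev lam = 0 → lam = 0 := by
      intro lam h0
      -- the characters are pairwise distinct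
      have hinjχ : Function.Injective fun w : P => (monChar (F := F) (w : Fin r → ℕ)) := by
        intro w₁ w₂ hw
        obtain ⟨g, hg⟩ := IsCyclic.exists_generator (α := Fˣ)
        have horder : orderOf g = c := by
          rw [orderOf_eq_card_of_forall_mem_zpowers hg, Nat.card_eq_fintype_card,
            Fintype.card_units]
        have hmod : (fun i => (w₁ : Fin r → ℕ) i % c) = fun i => (w₂ : Fin r → ℕ) i % c := by
          funext i
          have := congrArg (fun f => f (fun j => if j = i then g else 1)) hw
          simp only [monChar, MonoidHom.coe_mk, OneHom.coe_mk] at this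
          have hpow : ∀ (w : Fin r → ℕ),
              (∏ j, ((if j = i then (g : Fˣ) else 1 : Fˣ) : F) ^ (w j))
                = ((g : F)) ^ (w i) := by
            intro w
            rw [Finset.prod_eq_single i]
            · simp
            · intro j _ hj; simp [hj]
            · simp
          rw [hpow, hpow] at this
          have hgu : g ^ ((w₁ : Fin r → ℕ) i) = g ^ ((w₂ : Fin r → ℕ) i) :=
            Units.ext (by push_cast; exact this)
          have := pow_eq_pow_iff_modEq.mp hgu
          rw [horder] at this
          exact this
        exact Subtype.ext (hinjon w₁.2 w₂.2 hmod)
      have hli : LinearIndependent F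
          fun w : P => ((monChar (F := F) (w : Fin r → ℕ)) : (Fin r → Fˣ) → F) :=
        (linearIndependent_monoidHom (Fin r → Fˣ) F).comp _ hinjχ
      have hsum : ∑ w : P, lam w •
          ((monChar (F := F) (w : Fin r → ℕ)) : (Fin r → Fˣ) → F) = 0 := by
        funext t
        have := congrFun h0 t
        rw [hev] at this
        simpa [monChar, Finset.sum_apply] using this
      funext w
      exact Fintype.linearIndependent_iff.mp hli lam hsum w
    intro x y hxy
    have : ev (x - y) = 0 := by rw [map_sub, hxy, sub_self]
    have := hker _ this
    exact sub_eq_zero.mp this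
end

section
/- Let $0 \leq b_1, b_2 \leq q-2$. The code obtained by evaluating all polynomials $f \in \mathbb{F}_q[t_1, t_2]$ with $\deg_{t_1} f \leq b_1$ and $\deg_{t_2} f \leq b_2$ at all points of $(\mathbb{F}_q^\ast)^2$ has length $(q-1)^2$, dimension $(b_1+1)(b_2+1)$, and minimum distance exactly $(q-1-b_1)(q-1-b_2)$. -/
/-!
Write a polynomial `f` with `deg_{tᵢ} f ≤ bᵢ` as a polynomial in `t₀` whose coefficients are
polynomials in the remaining variables. Its leading coefficient is nonzero at `∏_{i ≥ 1} (q-1-bᵢ)`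
points of the smaller torus (by induction), and above each of them the restriction of `f` is a
nonzero polynomial in `t₀` of degree `≤ b₀`, nonzero at `≥ q-1-b₀` points of `F^*`. The bound is
attained by `∏ᵢ ∏_{a ∈ Aᵢ} (tᵢ - a)` with `Aᵢ ⊆ F^*` of size `bᵢ`. Since the bound is positive
when every `bᵢ ≤ q-2`, evaluation is injective on these polynomials, so the dimension of the code
is the number of monomials `t^d` with `dᵢ ≤ bᵢ`.
-/

open Finset Function

theorem hammingNorm_eq_sum_hammingNorm_cons {S R : Type*} [Fintype S] [Zero R] [DecidableEq R]
    {n : ℕ} (c : (Fin (n + 1) → S) → R) :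
    hammingNorm c = ∑ s : Fin n → S, hammingNorm fun y => c (Fin.cons y s) := by
  simp only [hammingNorm, card_filter]
  rw [← (Fin.consEquiv fun _ => S).sum_comp, Fintype.sum_prod_type_right]
  rfl

theorem Polynomial.card_sub_natDegree_le_hammingNorm_eval {R S : Type*} [CommRing R] [IsDomain R]
    [DecidableEq R] [Fintype S] {ι : S → R} (hι : Injective ι) {p : Polynomial R} (hp : p ≠ 0) :
    Fintype.card S - p.natDegree ≤ hammingNorm fun y => p.eval (ι y) := by
  have hroots : #{y | p.eval (ι y) = 0} ≤ p.natDegree := by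
    rw [← card_image_of_injective _ hι]
    refine card_le_degree_of_subset_roots fun x hx => ?_
    obtain ⟨y, hy, rfl⟩ := mem_image.mp hx
    exact (mem_roots hp).mpr (mem_filter.mp hy).2
  have := card_filter_add_card_filter_not (s := univ) fun y => p.eval (ι y) = 0
  simp only [hammingNorm, card_univ, ne_eq] at this ⊢
  omega

namespace MvPolynomial

variable {R S σ : Type*} [CommRing R]

noncomputable def evalGrid (ι : S → R) : MvPolynomial σ R →ₗ[R] (σ → S) → R :=
  LinearMap.pi fun t => (aeval (ι ∘ t)).toLinearMap

@[simp]
theorem evalGrid_apply (ι : S → R) (f : MvPolynomial σ R) (t : σ → S) :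
    evalGrid ι f t = eval (ι ∘ t) f :=
  rfl

variable (R) in
noncomputable def restrictDegreeOf (b : σ → ℕ) : Submodule R (MvPolynomial σ R) :=
  restrictSupport R {d | ∀ i, d i ≤ b i}

theorem mem_restrictDegreeOf_iff {b : σ → ℕ} {f : MvPolynomial σ R} :
    f ∈ restrictDegreeOf R b ↔ ∀ i, f.degreeOf i ≤ b i := by
  simp only [restrictDegreeOf, mem_restrictSupport_iff, Set.subset_def, Finset.mem_coe,
    Set.mem_ofPred_eq, degreeOf_le_iff]
  exact ⟨fun h i d hd => h d hd i, fun h d hd i => h i d hd⟩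

variable (R) in
theorem finrank_restrictDegreeOf [Nontrivial R] [Fintype σ] (b : σ → ℕ) :
    Module.finrank R (restrictDegreeOf R b) = ∏ i, (b i + 1) := by
  classical
  rw [restrictDegreeOf, Module.finrank_eq_nat_card_basis (basisRestrictSupport R _)]
  let e : {d : σ →₀ ℕ | ∀ i, d i ≤ b i} ≃ Set.Iic b :=
    Finsupp.equivFunOnFinite.subtypeEquiv fun _ => Iff.rfl
  rw [Nat.card_congr e, Nat.card_eq_fintype_card, Fintype.card_Iic, Pi.card_Iic]
  simp only [Nat.card_Iic]

section Weight

variable [IsDomain R] [Fintype S] {ι : S → R}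

theorem card_sub_le_hammingNorm_evalGrid_cons [DecidableEq R] (hι : Injective ι) {n : ℕ}
    {f : MvPolynomial (Fin (n + 1)) R} {b₀ : ℕ} (hb₀ : f.degreeOf 0 ≤ b₀) {s : Fin n → S}
    (hs : eval (ι ∘ s) (finSuccEquiv R n f).leadingCoeff ≠ 0) :
    Fintype.card S - b₀ ≤ hammingNorm fun y => evalGrid ι f (Fin.cons y s) := by
  set p := (finSuccEquiv R n f).map (eval (ι ∘ s))
  have hp : p ≠ 0 := fun h => hs (by
    rw [Polynomial.leadingCoeff, ← Polynomial.coeff_map]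
    change p.coeff _ = 0
    rw [h, Polynomial.coeff_zero])
  have hdeg : p.natDegree ≤ b₀ :=
    Polynomial.natDegree_map_le.trans ((natDegree_finSuccEquiv f).trans_le hb₀)
  calc Fintype.card S - b₀ ≤ Fintype.card S - p.natDegree := by omega
    _ ≤ hammingNorm fun y => p.eval (ι y) :=
      Polynomial.card_sub_natDegree_le_hammingNorm_eval hι hp
    _ = hammingNorm fun y => evalGrid ι f (Fin.cons y s) := by
      simp only [evalGrid_apply, Fin.comp_cons, eval_eq_eval_mv_eval', p]

theorem prod_card_sub_le_hammingNorm_evalGrid [DecidableEq R] (hι : Injective ι) {n : ℕ}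
    {f : MvPolynomial (Fin n) R} {b : Fin n → ℕ} (hf : f ≠ 0) (hb : ∀ i, f.degreeOf i ≤ b i) :
    ∏ i, (Fintype.card S - b i) ≤ hammingNorm (evalGrid ι f) := by
  induction n with
  | zero =>
    rw [Fin.prod_univ_zero, Nat.one_le_iff_ne_zero, hammingNorm_ne_zero_iff]
    intro h
    have hinj : Injective (eval (ι ∘ (finZeroElim : Fin 0 → S))) :=
      aeval_injective_iff_of_isEmpty.mpr fun _ _ h => h
    exact hf (hinj ((congrFun h finZeroElim).trans (map_zero _).symm))
  | succ n ih =>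
    set g := finSuccEquiv R n f
    have hg : g ≠ 0 := by simpa [g] using hf
    have hlc : ∏ j : Fin n, (Fintype.card S - b j.succ) ≤
        hammingNorm (evalGrid ι g.leadingCoeff) :=
      ih (Polynomial.leadingCoeff_ne_zero.mpr hg)
        fun j : Fin n => (degreeOf_coeff_finSuccEquiv f j _).trans (hb j.succ)
    calc ∏ i, (Fintype.card S - b i)
        = (Fintype.card S - b 0) * ∏ j : Fin n, (Fintype.card S - b j.succ) :=
          Fin.prod_univ_succ _
      _ ≤ (Fintype.card S - b 0) * hammingNorm (evalGrid ι g.leadingCoeff) :=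
        Nat.mul_le_mul_left _ hlc
      _ = ∑ s : Fin n → S with eval (ι ∘ s) g.leadingCoeff ≠ 0, (Fintype.card S - b 0) := by
        rw [sum_const, smul_eq_mul, mul_comm, hammingNorm]
        rfl
      _ ≤ ∑ s : Fin n → S with eval (ι ∘ s) g.leadingCoeff ≠ 0,
            hammingNorm fun y => evalGrid ι f (Fin.cons y s) :=
        sum_le_sum fun s hs =>
          card_sub_le_hammingNorm_evalGrid_cons hι (hb 0) (mem_filter.mp hs).2
      _ ≤ ∑ s : Fin n → S, hammingNorm fun y => evalGrid ι f (Fin.cons y s) :=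
        sum_le_sum_of_subset (filter_subset _ _)
      _ = hammingNorm (evalGrid ι f) := (hammingNorm_eq_sum_hammingNorm_cons _).symm

theorem eq_zero_of_evalGrid_eq_zero (hι : Injective ι) {n : ℕ} {f : MvPolynomial (Fin n) R}
    (hf : ∀ i, f.degreeOf i < Fintype.card S) (h : evalGrid ι f = 0) : f = 0 := by
  classical
  by_contra hf0
  have hweight := prod_card_sub_le_hammingNorm_evalGrid hι hf0 fun i => le_rfl
  rw [hammingNorm_eq_zero.mpr h, Nat.le_zero, prod_eq_zero_iff] at hweight
  obtain ⟨i, -, hi⟩ := hweight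
  exact (Nat.sub_ne_zero_of_lt (hf i)) hi

theorem finrank_map_evalGrid_restrictDegreeOf (hι : Injective ι) {n : ℕ} {b : Fin n → ℕ}
    (hb : ∀ i, b i < Fintype.card S) :
    Module.finrank R ((restrictDegreeOf R b).map (evalGrid ι)) = ∏ i, (b i + 1) := by
  have hinj : Injective ((evalGrid ι).comp (restrictDegreeOf R b).subtype) := by
    rw [← LinearMap.ker_eq_bot, LinearMap.ker_eq_bot']
    rintro ⟨f, hf⟩ h
    exact Subtype.ext <| eq_zero_of_evalGrid_eq_zero hι
      (fun i => (mem_restrictDegreeOf_iff.mp hf i).trans_lt (hb i)) h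
  rw [← Submodule.range_subtype (restrictDegreeOf R b), ← LinearMap.range_comp,
    LinearMap.finrank_range_of_inj hinj, finrank_restrictDegreeOf]

end Weight

theorem degreeOf_X_sub_C_le [Nontrivial R] [DecidableEq σ] (i j : σ) (c : R) :
    (X j - C c : MvPolynomial σ R).degreeOf i ≤ if i = j then 1 else 0 := by
  simpa [degreeOf_X] using degreeOf_sub_le i (X j) (C c)

theorem exists_degreeOf_le_hammingNorm_evalGrid_eq [Nontrivial R] [NoZeroDivisors R]
    [DecidableEq R] [Fintype S] [Fintype σ] [DecidableEq σ] {ι : S → R} (hι : Injective ι)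
    {b : σ → ℕ} (hb : ∀ i, b i ≤ Fintype.card S) :
    ∃ f : MvPolynomial σ R, (∀ i, f.degreeOf i ≤ b i) ∧
      hammingNorm (evalGrid ι f) = ∏ i, (Fintype.card S - b i) := by
  classical
  choose A hA using fun i => exists_subset_card_eq (s := (univ : Finset S)) (hb i)
  refine ⟨∏ i, ∏ a ∈ A i, (X i - C (ι a)), fun j => ?_, ?_⟩
  · calc degreeOf j (∏ i, ∏ a ∈ A i, (X i - C (ι a)))
        ≤ ∑ i, ∑ a ∈ A i, (X i - C (ι a) : MvPolynomial σ R).degreeOf j :=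
          (degreeOf_prod_le _ _ _).trans (sum_le_sum fun i _ => degreeOf_prod_le _ _ _)
      _ ≤ ∑ i, ∑ a ∈ A i, if j = i then 1 else 0 :=
          sum_le_sum fun i _ => sum_le_sum fun a _ => degreeOf_X_sub_C_le j i _
      _ = b j := by simp [(hA j).2]
  · have hsupport : ({t | evalGrid ι (∏ i, ∏ a ∈ A i, (X i - C (ι a))) t ≠ 0} : Finset (σ → S)) =
        Fintype.piFinset fun i => (A i)ᶜ := by
      ext t
      simp [prod_ne_zero_iff, sub_eq_zero, hι.eq_iff]
    rw [hammingNorm, hsupport, Fintype.card_piFinset]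
    simp [card_compl, (hA _).2]

end MvPolynomial

open MvPolynomial in
/-- The toric code of the rectangle `[0,b₁] × [0,b₂]` has length `(q-1)²`, dimension
`(b₁+1)(b₂+1)` and minimum distance exactly `(q-1-b₁)(q-1-b₂)`. -/
theorem rectangle_toric_code_parameters {F : Type*} [Field F] [Fintype F] [DecidableEq F]
    (b₁ b₂ : ℕ) (hb₁ : b₁ ≤ Fintype.card F - 2) (hb₂ : b₂ ≤ Fintype.card F - 2)
    (C : Set ((Fin 2 → Fˣ) → F))
    (hC : C = { c | ∃ f : MvPolynomial (Fin 2) F,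
        MvPolynomial.degreeOf 0 f ≤ b₁ ∧ MvPolynomial.degreeOf 1 f ≤ b₂ ∧
        c = fun t => MvPolynomial.eval (fun i => (t i : F)) f }) :
    Fintype.card (Fin 2 → Fˣ) = (Fintype.card F - 1) ^ 2 ∧
    Module.finrank F (Submodule.span F C) = (b₁ + 1) * (b₂ + 1) ∧
    (∀ c ∈ C, c ≠ 0 →
      (Fintype.card F - 1 - b₁) * (Fintype.card F - 1 - b₂) ≤ hammingNorm c) ∧
    (∃ c ∈ C, c ≠ 0 ∧
      hammingNorm c = (Fintype.card F - 1 - b₁) * (Fintype.card F - 1 - b₂)) := by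
  have hq : 2 ≤ Fintype.card F := Fintype.one_lt_card
  set b : Fin 2 → ℕ := ![b₁, b₂]
  have hb : ∀ i, b i < Fintype.card Fˣ := by
    simp only [Fin.forall_fin_two, b, Matrix.cons_val_zero, Matrix.cons_val_one,
      Fintype.card_units]
    exact ⟨by omega, by omega⟩
  have hcode : C = (restrictDegreeOf F b).map (evalGrid Units.val) := by
    ext c
    simp only [hC, Set.mem_ofPred_eq, Submodule.map_coe, Set.mem_image, SetLike.mem_coe,
      mem_restrictDegreeOf_iff, Fin.forall_fin_two, Matrix.cons_val_zero, Matrix.cons_val_one,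
      eq_comm, and_assoc, b]
    rfl
  have hprod : ∏ i, (Fintype.card Fˣ - b i) =
      (Fintype.card F - 1 - b₁) * (Fintype.card F - 1 - b₂) := by
    simp [Fin.prod_univ_two, b, Fintype.card_units]
  refine ⟨by rw [Fintype.card_fun, Fintype.card_units, Fintype.card_fin], ?_, ?_, ?_⟩
  · rw [hcode, Submodule.span_eq, finrank_map_evalGrid_restrictDegreeOf Units.val_injective hb,
      Fin.prod_univ_two]
    rfl
  · rintro c hc hc0
    rw [hcode] at hc
    obtain ⟨f, hf, rfl⟩ := hc
    rw [← hprod]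
    exact prod_card_sub_le_hammingNorm_evalGrid Units.val_injective
      (fun h => hc0 (by rw [h, map_zero])) (mem_restrictDegreeOf_iff.mp hf)
  · obtain ⟨f, hf, hw⟩ := exists_degreeOf_le_hammingNorm_evalGrid_eq Units.val_injective
      fun i => (hb i).le
    refine ⟨evalGrid Units.val f, hcode ▸ ⟨f, mem_restrictDegreeOf_iff.mpr hf, rfl⟩,
      hammingNorm_ne_zero_iff.mp ?_, hw.trans hprod⟩
    rw [hw, Finset.prod_ne_zero_iff]
    exact fun i _ => Nat.sub_ne_zero_of_lt (hb i)
end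

section
/- Let $f \in \mathbb{F}_q[t_1,\ldots,t_r]$ be nonzero with $\deg_{t_i} f \leq b_i \leq q-2$ for all $i$. Then the number of zeros of $f$ in $(\mathbb{F}_q^\ast)^r$ is at most $(q-1)^r - \prod_{i=1}^r (q-1-b_i)$. -/
/-!
We bound the non-zeros from below, on an arbitrary grid `S^r` inside an integral domain, by
`∏ (|S| - b_i)`. Write `f` as a polynomial in `t_0` over the other variables. At every point `a`
of `S^(r-1)` where its leading coefficient does not vanish (by induction there are at least
`∏_{i>0} (|S| - b_i)` of them), the specialization is a nonzero univariate polynomial of degree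
at most `b_0`, which vanishes at no more than `b_0` points of `S`. Taking `S = F^*` and passing to
the complement gives the bound on zeros.
-/

open Finset

theorem Polynomial.card_sub_natDegree_le_card_filter_eval_ne_zero {R S : Type*} [CommRing R]
    [IsDomain R] [DecidableEq R] [Fintype S] {ι : S → R} (hι : Function.Injective ι)
    {P : Polynomial R} (hP : P ≠ 0) :
    Fintype.card S - P.natDegree ≤ #{s | P.eval (ι s) ≠ 0} := by
  have hroots : #{s | P.eval (ι s) = 0} ≤ P.natDegree := by
    rw [← card_image_of_injective _ hι]
    refine card_le_degree_of_subset_roots fun x hx => ?_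
    obtain ⟨s, hs, rfl⟩ := mem_image.1 hx
    exact (mem_roots hP).2 (mem_filter.1 hs).2
  have := card_filter_add_card_filter_not (s := univ) (fun s => P.eval (ι s) = 0)
  rw [card_univ] at this
  simp only [ne_eq]
  omega

theorem Finset.card_filter_fin_cons {S : Type*} [Fintype S] {n : ℕ}
    (p : (Fin (n + 1) → S) → Prop) [DecidablePred p] :
    #{t | p t} = ∑ a : Fin n → S, #{x | p (Fin.cons x a)} := by
  simp only [card_filter]
  rw [← Fintype.sum_equiv (Fin.consEquiv fun _ => S)
    (fun xa => if p (Fin.cons xa.1 xa.2) then 1 else 0) _ fun _ => rfl,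
    Fintype.sum_prod_type_right]

namespace MvPolynomial

variable {R S : Type*} [CommRing R] [IsDomain R] [DecidableEq R] [Fintype S] {ι : S → R}

theorem card_sub_le_card_filter_eval_cons_ne_zero (hι : Function.Injective ι) {n d : ℕ}
    {f : MvPolynomial (Fin (n + 1)) R} (hd : degreeOf 0 f ≤ d) {a : Fin n → S}
    (ha : eval (ι ∘ a) (finSuccEquiv R n f).leadingCoeff ≠ 0) :
    Fintype.card S - d ≤ #{x | eval (ι ∘ Fin.cons x a) f ≠ 0} := by
  set P := (finSuccEquiv R n f).map (eval (ι ∘ a))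
  have hP : P ≠ 0 := fun h => ha <| by
    simpa [P, Polynomial.coeff_map] using congrArg (·.coeff (finSuccEquiv R n f).natDegree) h
  have hPd : P.natDegree ≤ d :=
    Polynomial.natDegree_map_le.trans ((natDegree_finSuccEquiv f).trans_le hd)
  calc Fintype.card S - d ≤ Fintype.card S - P.natDegree := by omega
    _ ≤ #{x | P.eval (ι x) ≠ 0} :=
      Polynomial.card_sub_natDegree_le_card_filter_eval_ne_zero hι hP
    _ = #{x | eval (ι ∘ Fin.cons x a) f ≠ 0} := by
      simp only [Fin.comp_cons, eval_eq_eval_mv_eval', P]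

theorem prod_card_sub_le_card_filter_eval_ne_zero (hι : Function.Injective ι) {r : ℕ}
    (b : Fin r → ℕ) {f : MvPolynomial (Fin r) R} (hf : f ≠ 0)
    (hdeg : ∀ i, degreeOf i f ≤ b i) :
    ∏ i, (Fintype.card S - b i) ≤ #{t : Fin r → S | eval (ι ∘ t) f ≠ 0} := by
  induction r with
  | zero =>
    have hconst : ∀ t : Fin 0 → S, eval (ι ∘ t) f ≠ 0 := fun t => by
      rwa [eq_C_of_isEmpty f, eval_C, Ne, ← C_eq_zero, ← eq_C_of_isEmpty]
    simp [filter_true_of_mem fun t _ => hconst t]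
  | succ n ih =>
    set g := (finSuccEquiv R n f).leadingCoeff
    have hg : g ≠ 0 := by simpa [g] using hf
    have hgdeg : ∀ j, degreeOf j g ≤ b j.succ :=
      fun j => (degreeOf_coeff_finSuccEquiv f j _).trans (hdeg j.succ)
    calc ∏ i, (Fintype.card S - b i)
        = (Fintype.card S - b 0) * ∏ j : Fin n, (Fintype.card S - b j.succ) :=
          Fin.prod_univ_succ _
      _ ≤ (Fintype.card S - b 0) * #{a : Fin n → S | eval (ι ∘ a) g ≠ 0} := by
          gcongr; exact ih _ hg hgdeg
      _ = ∑ a ∈ {a : Fin n → S | eval (ι ∘ a) g ≠ 0}, (Fintype.card S - b 0) := by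
          rw [sum_const, smul_eq_mul, mul_comm]
      _ ≤ ∑ a ∈ {a : Fin n → S | eval (ι ∘ a) g ≠ 0}, #{x | eval (ι ∘ Fin.cons x a) f ≠ 0} :=
          sum_le_sum fun a ha =>
            card_sub_le_card_filter_eval_cons_ne_zero hι (hdeg 0) (mem_filter.1 ha).2
      _ ≤ ∑ a, #{x | eval (ι ∘ Fin.cons x a) f ≠ 0} :=
          sum_le_univ_sum_of_nonneg fun _ => Nat.zero_le _
      _ = #{t : Fin (n + 1) → S | eval (ι ∘ t) f ≠ 0} :=
          (card_filter_fin_cons fun t => eval (ι ∘ t) f ≠ 0).symm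

end MvPolynomial

theorem zeros_bound_on_torus_general {F : Type*} [Field F] [Fintype F] [DecidableEq F]
    {r : ℕ} (b : Fin r → ℕ)
    (f : MvPolynomial (Fin r) F) (hf : f ≠ 0)
    (hdeg : ∀ i, MvPolynomial.degreeOf i f ≤ b i) :
    (Finset.univ.filter
        (fun t : Fin r → Fˣ => MvPolynomial.eval (fun i => (t i : F)) f = 0)).card ≤
      (Fintype.card F - 1) ^ r - ∏ i, (Fintype.card F - 1 - b i) := by
  have hnonzeros : ∏ i, (Fintype.card Fˣ - b i) ≤
      #{t : Fin r → Fˣ | ¬MvPolynomial.eval (fun i => (t i : F)) f = 0} :=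
    MvPolynomial.prod_card_sub_le_card_filter_eval_ne_zero Units.val_injective b hf hdeg
  have hsplit := card_filter_add_card_filter_not (s := univ)
    (fun t : Fin r → Fˣ => MvPolynomial.eval (fun i => (t i : F)) f = 0)
  rw [card_univ, Fintype.card_fun, Fintype.card_units, Fintype.card_fin] at hsplit
  rw [Fintype.card_units] at hnonzeros
  omega

/-- A nonzero polynomial with `deg_{t_i} f ≤ b_i ≤ q-2` has at most
`(q-1)^r - ∏ (q-1-b_i)` zeros in the torus. -/
theorem zeros_bound_on_torus {F : Type*} [Field F] [Fintype F] [DecidableEq F]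
    {r : ℕ} (hr : 1 ≤ r) (b : Fin r → ℕ) (hb : ∀ i, b i ≤ Fintype.card F - 2)
    (f : MvPolynomial (Fin r) F) (hf : f ≠ 0)
    (hdeg : ∀ i, MvPolynomial.degreeOf i f ≤ b i) :
    (Finset.univ.filter
        (fun t : Fin r → Fˣ => MvPolynomial.eval (fun i => (t i : F)) f = 0)).card ≤
      (Fintype.card F - 1) ^ r - ∏ i, (Fintype.card F - 1 - b i) :=
  zeros_bound_on_torus_general b f hf hdeg
end

section
/- (Upper bound on minimum distance via embedded boxes) Let $P \subset \mathbb{Z}_{\geq 0}^r$ be a finite set of exponent vectors, $\overline{P}$ its componentwise reduction mod $q-1$ into $\{0,\ldots,q-2\}^r$, and suppose there exist $u \in \mathbb{Z}^r$ and integers $0 \leq l_i \leq q-2$ such that the reduction mod $q-1$ of $u + (\{0,\ldots,l_1\} \times \cdots \times \{0,\ldots,l_r\})$ is contained in $\overline{P}$. Then the minimum distance $d$ of the toric code $\mathcal{C}_P$ satisfies $d \leq (q-1)^r - \sum_{j=1}^{r} (-1)^{j+1} \sum_{i_1 < \cdots < i_j} l_{i_1} \cdots l_{i_j} (q-1)^{r-j}$.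 -/
/-!
Pick subsets `Sᵢ ⊆ 𝔽_q^*` with `|Sᵢ| = lᵢ` and take the function
`c(t) = t^u ∏ᵢ ∏_{a ∈ Sᵢ} (tᵢ - a)` on the torus. Expanding the products, `c` is a combination of
the monomials `t^(u+v)` with `0 ≤ vᵢ ≤ lᵢ`; since `t^(q-1) = 1` on the torus, these agree with
monomials `t^w`, `w ∈ P`, so `c ∈ 𝒞_P`. Its support is the box `∏ᵢ (𝔽_q^* \ Sᵢ)`, so its weight is
`∏ᵢ (q - 1 - lᵢ)`, which is positive and expands to the stated alternating sum.
-/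

open Finset Polynomial

theorem prod_sub_eq_pow_sub_alternating_sum {R ι : Type*} [CommRing R] [Fintype ι]
    [DecidableEq ι] (x : R) (g : ι → R) :
    ∏ i, (x - g i) = x ^ Fintype.card ι - ∑ j ∈ Icc 1 (Fintype.card ι), (-1) ^ (j + 1) *
      ∑ s ∈ powersetCard j univ, (∏ i ∈ s, g i) * x ^ (Fintype.card ι - j) := by
  rw [prod_sub, sum_powerset, card_univ, sum_range_succ', ← Ico_add_one_right_eq_Icc,
    sum_Ico_eq_sum_range, Nat.add_sub_cancel, add_comm, sub_eq_add_neg, ← sum_neg_distrib]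
  congr 1
  · simp
  refine sum_congr rfl fun j _ => ?_
  rw [mul_sum, ← sum_neg_distrib, add_comm 1 j]
  refine sum_congr rfl fun s hs => ?_
  rw [mem_powersetCard] at hs
  rw [prod_const, card_sdiff_of_subset hs.1, hs.2, card_univ]
  ring

section Torus

variable {F ι : Type*} [Field F] [Fintype ι]

def torusMonomial (e : ι → ℤ) (t : ι → Fˣ) : F := ∏ i, ((t i ^ e i : Fˣ) : F)

theorem torusMonomial_natCast (w : ι → ℕ) :
    torusMonomial (fun i => (w i : ℤ)) = fun t : ι → Fˣ => ∏ i, (t i : F) ^ w i := by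
  ext t
  simp [torusMonomial]

theorem torusMonomial_eq_of_emod_eq [Fintype F] [DecidableEq F] {e e' : ι → ℤ}
    (h : ∀ i, e i % Fintype.card Fˣ = e' i % Fintype.card Fˣ) :
    (torusMonomial e : (ι → Fˣ) → F) = torusMonomial e' := by
  ext t
  refine prod_congr rfl fun i _ => ?_
  rw [zpow_eq_zpow_emod' (e i) (pow_card_eq_one (x := t i)), h i,
    ← zpow_eq_zpow_emod' (e' i) (pow_card_eq_one (x := t i))]

theorem prod_zpow_mul_eval_mem_span (u : ι → ℤ) (f : ι → F[X]) :
    (fun t : ι → Fˣ => ∏ i, ((t i ^ u i : Fˣ) : F) * (f i).eval (t i : F)) ∈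
      Submodule.span F ((fun v : ι → ℕ => torusMonomial (fun i => u i + v i)) ''
        {v | ∀ i, v i ≤ (f i).natDegree}) := by
  classical
  have hexpand : (fun t : ι → Fˣ => ∏ i, ((t i ^ u i : Fˣ) : F) * (f i).eval (t i : F)) =
      ∑ v ∈ Fintype.piFinset (fun i => range ((f i).natDegree + 1)),
        (∏ i, (f i).coeff (v i)) • torusMonomial (fun i => u i + v i) := by
    ext t
    simp only [eval_eq_sum_range, mul_sum, prod_univ_sum, Finset.sum_apply, Pi.smul_apply,
      smul_eq_mul, torusMonomial, ← prod_mul_distrib]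
    refine sum_congr rfl fun v _ => prod_congr rfl fun i _ => ?_
    rw [zpow_add, zpow_natCast, Units.val_mul, Units.val_pow_eq_pow_val]
    ring
  rw [hexpand]
  refine Submodule.sum_mem _ fun v hv => Submodule.smul_mem _ _ (Submodule.subset_span ?_)
  refine ⟨v, fun i => ?_, rfl⟩
  exact Nat.lt_succ_iff.mp (mem_range.mp (Fintype.mem_piFinset.mp hv i))

def boxCodeword (u : ι → ℤ) (S : ι → Finset Fˣ) (t : ι → Fˣ) : F :=
  ∏ i, ((t i ^ u i : Fˣ) : F) * ∏ a ∈ S i, ((t i : F) - a)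

theorem boxCodeword_mem_span (u : ι → ℤ) (S : ι → Finset Fˣ) :
    (boxCodeword u S : (ι → Fˣ) → F) ∈
      Submodule.span F ((fun v : ι → ℕ => torusMonomial (fun i => u i + v i)) ''
        {v | ∀ i, v i ≤ #(S i)}) := by
  have heval : (boxCodeword u S : (ι → Fˣ) → F) =
      fun t => ∏ i, ((t i ^ u i : Fˣ) : F) * (∏ a ∈ S i, (X - C (a : F))).eval (t i : F) := by
    ext t
    simp [boxCodeword, eval_prod]
  have hmem := prod_zpow_mul_eval_mem_span u (fun i => ∏ a ∈ S i, (X - C (a : F)))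
  simp only [natDegree_finsetProd_X_sub_C_eq_card] at hmem
  rw [heval]
  exact hmem

theorem boxCodeword_ne_zero_iff (u : ι → ℤ) (S : ι → Finset Fˣ) (t : ι → Fˣ) :
    boxCodeword u S t ≠ 0 ↔ ∀ i, t i ∉ S i := by
  simp [boxCodeword, prod_eq_zero_iff, sub_eq_zero, Units.val_inj,
    zpow_ne_zero _ (Units.ne_zero _)]

theorem hammingNorm_boxCodeword [DecidableEq ι] [Fintype F] [DecidableEq F] (u : ι → ℤ)
    (S : ι → Finset Fˣ) :
    hammingNorm (boxCodeword u S : (ι → Fˣ) → F) = ∏ i, (Fintype.card Fˣ - #(S i)) := by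
  have hsupp :
      univ.filter (fun t => boxCodeword u S t ≠ 0) = Fintype.piFinset fun i => (S i)ᶜ := by
    ext t
    simp [boxCodeword_ne_zero_iff]
  unfold hammingNorm
  rw [hsupp, Fintype.card_piFinset]
  simp [card_compl]

end Torus

theorem toric_code_minimum_distance_upper_bound_general {F : Type*} [Field F] [Fintype F]
    [DecidableEq F] {r : ℕ} (P : Finset (Fin r → ℕ))
    (u : Fin r → ℤ) (l : Fin r → ℕ) (hl : ∀ i, l i ≤ Fintype.card F - 2)
    (hbox : ∀ v : Fin r → ℕ, (∀ i, v i ≤ l i) →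
      (fun i => (u i + v i) % ((Fintype.card F : ℤ) - 1)) ∈
        P.image (fun w => fun i => ((w i : ℤ)) % ((Fintype.card F : ℤ) - 1))) :
    ∃ c ∈ Submodule.span F
        ((fun w : Fin r → ℕ => fun t : Fin r → Fˣ => ∏ i, ((t i : F)) ^ (w i)) '' P),
      c ≠ 0 ∧ (hammingNorm c : ℤ) ≤ ((Fintype.card F : ℤ) - 1) ^ r -
        ∑ j ∈ Finset.Icc 1 r, (-1 : ℤ) ^ (j + 1) *
          ∑ s ∈ Finset.powersetCard j (Finset.univ : Finset (Fin r)),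
            (∏ i ∈ s, (l i : ℤ)) * ((Fintype.card F : ℤ) - 1) ^ (r - j) := by
  have hq : 2 ≤ Fintype.card F := Fintype.one_lt_card
  have hunits : Fintype.card Fˣ = Fintype.card F - 1 := Fintype.card_units F
  have hunitsZ : (Fintype.card Fˣ : ℤ) = Fintype.card F - 1 := by omega
  have hlt : ∀ i, l i < Fintype.card Fˣ := fun i => by have := hl i; omega
  choose S _ hS using fun i => exists_subset_card_eq (s := (univ : Finset Fˣ)) (n := l i)
    (by rw [card_univ]; exact (hlt i).le)
  have hspan : (fun v : Fin r → ℕ => torusMonomial (fun i => u i + v i)) ''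
      {v | ∀ i, v i ≤ #(S i)} ⊆
        (fun w : Fin r → ℕ => fun t : Fin r → Fˣ => ∏ i, ((t i : F)) ^ (w i)) '' P := by
    rintro _ ⟨v, hv, rfl⟩
    obtain ⟨w, hwP, hw⟩ := mem_image.mp (hbox v fun i => hS i ▸ hv i)
    refine ⟨w, hwP, ?_⟩
    dsimp only
    rw [← torusMonomial_natCast]
    exact torusMonomial_eq_of_emod_eq fun i => by rw [hunitsZ]; exact congrFun hw i
  have hweight : (hammingNorm (boxCodeword u S : (Fin r → Fˣ) → F) : ℤ) =
      ∏ i, (((Fintype.card F : ℤ) - 1) - l i) := by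
    rw [hammingNorm_boxCodeword, Nat.cast_prod]
    refine prod_congr rfl fun i _ => ?_
    rw [hS, Nat.cast_sub (hlt i).le, hunitsZ]
  refine ⟨boxCodeword u S, Submodule.span_mono hspan (boxCodeword_mem_span u S), ?_, ?_⟩
  · rw [← hammingNorm_ne_zero_iff, hammingNorm_boxCodeword, prod_ne_zero_iff]
    exact fun i _ => by rw [hS]; exact Nat.sub_ne_zero_of_lt (hlt i)
  · refine le_of_eq ?_
    rw [hweight, prod_sub_eq_pow_sub_alternating_sum, Fintype.card_fin]

/-- Upper bound on the minimum distance of a toric code via an embedded box: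
if the reduction mod `q-1` of the box `u + ∏ {0,…,l_i}` is contained in the reduction
of `P`, then there is a nonzero codeword of weight at most
`(q-1)^r - ∑_{j=1}^r (-1)^{j+1} ∑_{i₁<⋯<i_j} l_{i₁}⋯l_{i_j}(q-1)^{r-j}`. -/
theorem toric_code_minimum_distance_upper_bound {F : Type*} [Field F] [Fintype F]
    [DecidableEq F] {r : ℕ} (hr : 1 ≤ r) (P : Finset (Fin r → ℕ))
    (u : Fin r → ℤ) (l : Fin r → ℕ) (hl : ∀ i, l i ≤ Fintype.card F - 2)
    (hbox : ∀ v : Fin r → ℕ, (∀ i, v i ≤ l i) →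
      (fun i => (u i + v i) % ((Fintype.card F : ℤ) - 1)) ∈
        P.image (fun w => fun i => ((w i : ℤ)) % ((Fintype.card F : ℤ) - 1))) :
    ∃ c ∈ Submodule.span F
        ((fun w : Fin r → ℕ => fun t : Fin r → Fˣ => ∏ i, ((t i : F)) ^ (w i)) '' P),
      c ≠ 0 ∧ (hammingNorm c : ℤ) ≤ ((Fintype.card F : ℤ) - 1) ^ r -
        ∑ j ∈ Finset.Icc 1 r, (-1 : ℤ) ^ (j + 1) *
          ∑ s ∈ Finset.powersetCard j (Finset.univ : Finset (Fin r)),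
            (∏ i ∈ s, (l i : ℤ)) * ((Fintype.card F : ℤ) - 1) ^ (r - j) :=
  toric_code_minimum_distance_upper_bound_general P u l hl hbox
end

section
/- For the toric code over $\mathbb{F}_q$ ($q \geq 5$) associated to the plane polytope with vertices $(0,0)$, $(1,1)$, $(0,2)$, whose minimum distance is $d = (q-1)^2 - 2(q-1)$, the choice $N = q-2$ satisfies $2N \leq (q-1)^2 \leq 2N^2$ while $(q-1)^2 - 2N > d$; hence Joyner's Conjecture 4.2 bound $d \geq n - 2N\,\mathrm{vol}(P_D)$ fails. -/
private lemma joyner_aux_arith (q w : ℕ) (hq : 5 ≤ q)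
    (hw : w ≤ (q - 1) * (q - 1 - 2)) :
    (w : ℤ) < ((q : ℤ) - 1) ^ 2 - 2 * ((q : ℤ) - 2) := by
  have h1 : ((q - 1 : ℕ) : ℤ) = (q : ℤ) - 1 := by omega
  have h2 : ((q - 1 - 2 : ℕ) : ℤ) = (q : ℤ) - 3 := by omega
  have h3 : (w : ℤ) ≤ ((q : ℤ) - 1) * ((q : ℤ) - 3) := by
    have := (Nat.cast_le (α := ℤ)).mpr hw
    rwa [Nat.cast_mul, h1, h2] at this
  nlinarith

/-- Counterexample to Joyner's Conjecture 4.2: for `q ≥ 5` and `N = q-2` the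
hypothesis `2N·vol(P) ≤ n ≤ 2N²·vol(P)` holds (with `vol(P)=1`, `n=(q-1)²`) for the
toric code of the polytope with vertices `(0,0),(1,1),(0,2)` (lattice points
`(0,0),(0,1),(0,2),(1,1)`), yet there is a nonzero codeword of weight strictly
less than `n - 2N`. -/
theorem joyner_conjecture_42_counterexample {F : Type*} [Field F] [Fintype F]
    [DecidableEq F] (hq : 5 ≤ Fintype.card F) :
    (2 * ((Fintype.card F : ℤ) - 2) ≤ ((Fintype.card F : ℤ) - 1) ^ 2 ∧
      ((Fintype.card F : ℤ) - 1) ^ 2 ≤ 2 * ((Fintype.card F : ℤ) - 2) ^ 2) ∧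
    ∃ c ∈ Submodule.span F
        ((fun w : Fin 2 → ℕ => fun t : Fin 2 → Fˣ => ((t 0 : F)) ^ (w 0) * ((t 1 : F)) ^ (w 1)) ''
          ({![0, 0], ![0, 1], ![0, 2], ![1, 1]} : Set (Fin 2 → ℕ))),
      c ≠ 0 ∧
        (hammingNorm c : ℤ) < ((Fintype.card F : ℤ) - 1) ^ 2 - 2 * ((Fintype.card F : ℤ) - 2) := by
  set q : ℤ := (Fintype.card F : ℤ) with hqdef
  have hq5 : (5 : ℤ) ≤ q := by rw [hqdef]; exact_mod_cast hq
  refine ⟨⟨by nlinarith, by nlinarith⟩, ?_⟩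
  -- card of units
  have hcu : Fintype.card Fˣ = Fintype.card F - 1 := Fintype.card_units F
  have hcu4 : 4 ≤ Fintype.card Fˣ := by omega
  have : Nontrivial Fˣ := Fintype.one_lt_card_iff_nontrivial.mp (by omega)
  obtain ⟨b, hb⟩ := exists_ne (1 : Fˣ)
  -- the monomial map
  set m : (Fin 2 → ℕ) → (Fin 2 → Fˣ) → F :=
    (fun w : Fin 2 → ℕ => fun t : Fin 2 → Fˣ => ((t 0 : F)) ^ (w 0) * ((t 1 : F)) ^ (w 1)) with hm
  -- codeword c t = (t1 - 1)(t1 - b)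
  set c : (Fin 2 → Fˣ) → F :=
    ((b : F) • m ![0,0] + (-(1 + (b : F))) • m ![0,1] + (1 : F) • m ![0,2]) with hc
  have hceval : ∀ t : Fin 2 → Fˣ, c t = ((t 1 : F) - 1) * ((t 1 : F) - b) := by
    intro t
    simp only [hc, hm, Pi.add_apply, Pi.smul_apply, smul_eq_mul,
      Matrix.cons_val_zero, Matrix.cons_val_one, Matrix.head_cons]
    simp only [pow_zero, pow_one, pow_two]
    ring
  refine ⟨c, ?_, ?_, ?_⟩
  · -- span membership
    apply Submodule.add_mem
    apply Submodule.add_mem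
    · exact Submodule.smul_mem _ _ (Submodule.subset_span ⟨![0,0], by simp, rfl⟩)
    · exact Submodule.smul_mem _ _ (Submodule.subset_span ⟨![0,1], by simp, rfl⟩)
    · exact Submodule.smul_mem _ _ (Submodule.subset_span ⟨![0,2], by simp, rfl⟩)
  · -- nonzero: pick y ∉ {1, b}
    have hcard : (({1, b} : Finset Fˣ)ᶜ).Nonempty := by
      rw [← Finset.card_pos, Finset.card_compl]
      have h2 : ({1, b} : Finset Fˣ).card ≤ 2 := Finset.card_insert_le _ _ |>.trans (by simp)
      omega
    obtain ⟨y, hy⟩ := hcard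
    simp only [Finset.mem_compl, Finset.mem_insert, Finset.mem_singleton, not_or] at hy
    intro h0
    have := congrFun h0 ![y, y]
    rw [hceval] at this
    simp only [Matrix.cons_val_one, Matrix.head_cons, Pi.zero_apply] at this
    have h1 : (y : F) - 1 ≠ 0 := sub_ne_zero.mpr (fun h => hy.1 (Units.ext (by simpa using h)))
    have h2 : (y : F) - (b : F) ≠ 0 := sub_ne_zero.mpr (fun h => hy.2 (Units.ext (by simpa using h)))
    exact mul_ne_zero h1 h2 this
  · -- weight bound
    have hsub : hammingNorm c ≤
        (Finset.univ.filter (fun t : Fin 2 → Fˣ => t 1 ≠ 1 ∧ t 1 ≠ b)).card := by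
      apply Finset.card_le_card
      intro t ht
      simp only [hammingNorm, Finset.mem_filter, Finset.mem_univ, true_and] at ht ⊢
      constructor
      · intro h; apply ht; rw [hceval, h]; simp
      · intro h; apply ht; rw [hceval, h]; simp
    have hcount : (Finset.univ.filter (fun t : Fin 2 → Fˣ => t 1 ≠ 1 ∧ t 1 ≠ b)).card
        = Fintype.card Fˣ * (Fintype.card Fˣ - 2) := by
      rw [← Fintype.card_subtype]
      have e : {t : Fin 2 → Fˣ // t 1 ≠ 1 ∧ t 1 ≠ b} ≃ Fˣ × {y : Fˣ // y ≠ 1 ∧ y ≠ b} :=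
        { toFun := fun t => (t.1 0, ⟨t.1 1, t.2⟩)
          invFun := fun p => ⟨![p.1, p.2.1], by simpa using p.2.2⟩
          left_inv := by
            intro t
            apply Subtype.ext
            funext i
            fin_cases i <;> simp
          right_inv := by intro p; simp }
      rw [Fintype.card_congr e, Fintype.card_prod]
      congr 1
      rw [Fintype.card_subtype]
      have : (Finset.univ.filter (fun y : Fˣ => y ≠ 1 ∧ y ≠ b)) = ({1, b} : Finset Fˣ)ᶜ := by
        ext y
        simp [not_or]
      rw [this, Finset.card_compl, Finset.card_insert_of_notMem (by simpa using hb.symm),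
        Finset.card_singleton]
    have hnat : hammingNorm c ≤ (Fintype.card F - 1) * (Fintype.card F - 1 - 2) := by
      rw [hcu] at hcount
      exact hsub.trans_eq hcount
    exact joyner_aux_arith _ _ hq hnat
end

section
/- For all integers $q \geq 8$, one has $(q-1)^2 - 6 > (q-1)^2 - (q-1)$; consequently the bound $d \geq n - r!\,(\#P \cap M)$ of Joyner's Conjecture 4.3 fails for the toric code on $\mathbb{P}^2$ from the standard simplex (vertices $(0,0)$, $(1,0)$, $(0,1)$), whose true minimum distance is $(q-1)^2 - (q-1)$ while $n - r!\,(\#P \cap M) = (q-1)^2 - 2 \cdot 3$. -/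
/-- Counterexample to Joyner's Conjecture 4.3: for `q ≥ 8`,
`(q-1)² - 2·3 > (q-1)² - (q-1)`, and the toric code on `ℙ²` from the standard
simplex (evaluations of `λ₀ + λ₁t₁ + λ₂t₂` on the torus) has a nonzero codeword of
weight `(q-1)² - (q-1)`, which is strictly less than the conjectured bound
`n - r!·#(P ∩ M) = (q-1)² - 2·3`. -/
theorem joyner_conjecture_43_counterexample {F : Type*} [Field F] [Fintype F]
    [DecidableEq F] (hq : 8 ≤ Fintype.card F)
    (C : Set ((Fin 2 → Fˣ) → F))
    (hC : C = { c | ∃ l0 l1 l2 : F, c = fun t => l0 + l1 * (t 0 : F) + l2 * (t 1 : F) }) :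
    ((Fintype.card F : ℤ) - 1) ^ 2 - 2 * 3 >
      ((Fintype.card F : ℤ) - 1) ^ 2 - ((Fintype.card F : ℤ) - 1) ∧
    ∃ c ∈ C, c ≠ 0 ∧
      hammingNorm c = (Fintype.card F - 1) ^ 2 - (Fintype.card F - 1) ∧
      (hammingNorm c : ℤ) < ((Fintype.card F : ℤ) - 1) ^ 2 - 2 * 3 := by
  have hqZ : (8 : ℤ) ≤ (Fintype.card F : ℤ) := by exact_mod_cast hq
  set q := Fintype.card F with hqdef
  have hu : Fintype.card Fˣ = q - 1 := Fintype.card_units F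
  set c : (Fin 2 → Fˣ) → F := fun t => 1 + (-1) * (t 0 : F) + 0 * (t 1 : F) with hc
  have hzero : ∀ t : Fin 2 → Fˣ, c t = 0 ↔ t 0 = 1 := by
    intro t
    constructor
    · intro h
      have : ((t 0 : F)) = 1 := by
        have := h
        simp only [hc] at this
        linear_combination -this
      exact Units.ext (by simpa using this)
    · intro h; simp [hc, h]
  have hmem : c ∈ C := by rw [hC]; exact ⟨1, -1, 0, rfl⟩
  have hnormdef : hammingNorm c = (Finset.univ.filter fun t : Fin 2 → Fˣ => ¬ c t = 0).card := rfl
  clear_value c q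
  -- cardinality of the zero set
  have e : {t : Fin 2 → Fˣ // t 0 = 1} ≃ Fˣ :=
    { toFun := fun t => t.1 1
      invFun := fun u => ⟨![1, u], rfl⟩
      left_inv := by
        rintro ⟨t, ht⟩
        apply Subtype.ext
        funext i
        match i with
        | 0 => exact ht.symm
        | 1 => rfl
      right_inv := fun u => rfl }
  have hcard1 : (Finset.univ.filter fun t : Fin 2 → Fˣ => t 0 = 1).card = q - 1 := by
    calc (Finset.univ.filter fun t : Fin 2 → Fˣ => t 0 = 1).card
        = Fintype.card {t : Fin 2 → Fˣ // t 0 = 1} := (Fintype.card_subtype _).symm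
      _ = Fintype.card Fˣ := Fintype.card_congr e
      _ = q - 1 := hu
  have h0 : (Finset.univ.filter fun t : Fin 2 → Fˣ => c t = 0).card = q - 1 := by
    simpa only [hzero] using hcard1
  clear hcard1
  have hcardtot : Fintype.card (Fin 2 → Fˣ) = (q - 1) ^ 2 := by
    simp [Fintype.card_fun, hu, sq]
  have hnorm : hammingNorm c = (q - 1) ^ 2 - (q - 1) := by
    have hsplit := Finset.card_filter_add_card_filter_not
      (s := (Finset.univ : Finset (Fin 2 → Fˣ))) (p := fun t => c t = 0)
    simp only [Finset.card_univ, hcardtot] at hsplit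
    rw [hnormdef]
    omega
  refine ⟨by nlinarith, c, hmem, ?_, ?_, ?_⟩
  · -- nonzero: pick x ≠ 1 in Fˣ
    have hnt : Nontrivial Fˣ := by
      rw [← Fintype.one_lt_card_iff_nontrivial, hu]; omega
    obtain ⟨x, hx⟩ := exists_ne (1 : Fˣ)
    intro hc0
    have : c (fun _ => x) = 0 := by rw [hc0]; rfl
    exact hx (by simpa using (hzero (fun _ => x)).1 this)
  · exact hnorm
  · rw [hnorm]
    have h1 : (1:ℕ) ≤ q - 1 := by omega
    have : ((q - 1) ^ 2 - (q - 1) : ℕ) = ((q:ℤ) - 1)^2 - ((q:ℤ) - 1) := by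
      have h2 : (q - 1) ≤ (q - 1) ^ 2 := Nat.le_self_pow (by norm_num) _
      rw [Nat.cast_sub h2, Nat.cast_pow, Nat.cast_sub (by omega : 1 ≤ q)]
      push_cast
      ring
    rw [this]; nlinarith
end

section
/- The toric code over $\mathbb{F}_q$ obtained by evaluating all polynomials $\lambda_0 + \lambda_1 t_1 + \lambda_2 t_2$ (with $\lambda_i \in \mathbb{F}_q$, $q \geq 3$) at all points of $(\mathbb{F}_q^\ast)^2$ has dimension 3 and minimum distance exactly $(q-1)^2 - (q-1)$. -/
section Aux
variable {F : Type*} [Field F] [Fintype F] [DecidableEq F]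

lemma aux_card_univ : Fintype.card (Fin 2 → Fˣ) = (Fintype.card F - 1) ^ 2 := by
  rw [Fintype.card_fun, Fintype.card_units, Fintype.card_fin]

lemma aux_zeros_le (l0 l1 l2 : F) (h : ¬(l0 = 0 ∧ l1 = 0 ∧ l2 = 0)) :
    (Finset.univ.filter (fun t : Fin 2 → Fˣ => l0 + l1 * (t 0 : F) + l2 * (t 1 : F) = 0)).card
      ≤ Fintype.card F - 1 := by
  rw [← Fintype.card_units (α := F), ← Finset.card_univ (α := Fˣ)]
  by_cases h2 : l2 ≠ 0
  · refine Finset.card_le_card_of_injOn (fun t => t 0) (fun _ _ => Finset.mem_univ _) ?_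
    intro t ht s hs h01
    have h00 : (t 0 : F) = (s 0 : F) := congrArg Units.val h01
    simp only [Finset.coe_filter, Set.mem_setOf_eq, Finset.mem_univ, true_and] at ht hs
    have h1 : (t 1 : F) = (s 1 : F) := by
      refine mul_left_cancel₀ h2 ?_
      linear_combination ht - hs - l1 * h00
    funext i
    fin_cases i
    · exact h01
    · exact Units.ext h1
  · push_neg at h2
    subst h2
    by_cases h1 : l1 ≠ 0
    · refine Finset.card_le_card_of_injOn (fun t => t 1) (fun _ _ => Finset.mem_univ _) ?_
      intro t ht s hs h01
      have h11 : (t 1 : F) = (s 1 : F) := congrArg Units.val h01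
      simp only [Finset.coe_filter, Set.mem_setOf_eq, Finset.mem_univ, true_and] at ht hs
      have h0 : (t 0 : F) = (s 0 : F) := by
        refine mul_left_cancel₀ h1 ?_
        linear_combination ht - hs
      funext i
      fin_cases i
      · exact Units.ext h0
      · exact h01
    · push_neg at h1
      subst h1
      have h0 : l0 ≠ 0 := by tauto
      have : (Finset.univ.filter
          (fun t : Fin 2 → Fˣ => l0 + 0 * (t 0 : F) + 0 * (t 1 : F) = 0)) = ∅ := by
        apply Finset.filter_false_of_mem
        intro t _
        simpa using h0
      rw [this]
      simp

lemma aux_hammingNorm (c : (Fin 2 → Fˣ) → F) :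
    hammingNorm c = Fintype.card (Fin 2 → Fˣ)
      - (Finset.univ.filter (fun t => c t = 0)).card := by
  have h := Finset.card_filter_add_card_filter_not
    (s := (Finset.univ : Finset (Fin 2 → Fˣ))) (fun t => c t = 0)
  rw [Finset.card_univ] at h
  rw [hammingNorm]
  simp only [ne_eq] at *
  omega

end Aux

/-- The toric code of affine-linear polynomials in two variables over `𝔽_q`, `q ≥ 3`,
has dimension 3 and minimum distance exactly `(q-1)² - (q-1)`. -/
theorem simplex_toric_code_parameters {F : Type*} [Field F] [Fintype F] [DecidableEq F]
    (hq : 3 ≤ Fintype.card F)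
    (C : Set ((Fin 2 → Fˣ) → F))
    (hC : C = { c | ∃ l0 l1 l2 : F, c = fun t => l0 + l1 * (t 0 : F) + l2 * (t 1 : F) }) :
    Module.finrank F (Submodule.span F C) = 3 ∧
    (∀ c ∈ C, c ≠ 0 →
      (Fintype.card F - 1) ^ 2 - (Fintype.card F - 1) ≤ hammingNorm c) ∧
    (∃ c ∈ C, c ≠ 0 ∧
      hammingNorm c = (Fintype.card F - 1) ^ 2 - (Fintype.card F - 1)) := by
  subst hC
  have hcard : 1 < Fintype.card Fˣ := by
    rw [Fintype.card_units]; omega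
  obtain ⟨a, ha⟩ := Fintype.exists_ne_of_one_lt_card hcard 1
  have haF : (a : F) ≠ 1 := fun h => ha (Units.ext (by simpa using h))
  let L : (Fin 3 → F) →ₗ[F] ((Fin 2 → Fˣ) → F) :=
    { toFun := fun l => fun t => l 0 + l 1 * (t 0 : F) + l 2 * (t 1 : F)
      map_add' := by intro l m; funext t; simp; ring
      map_smul' := by intro r l; funext t; simp; ring }
  have hLinj : Function.Injective L := by
    rw [← LinearMap.ker_eq_bot, LinearMap.ker_eq_bot']
    intro l hl
    have hE : ∀ t : Fin 2 → Fˣ, l 0 + l 1 * (t 0 : F) + l 2 * (t 1 : F) = 0 := fun t =>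
      congrFun hl t
    have e1 := hE (fun _ => 1)
    have e2 := hE (fun i => if i = 0 then a else 1)
    have e3 := hE (fun i => if i = 0 then 1 else a)
    simp only [Units.val_one, mul_one] at e1 e2 e3
    simp at e2 e3
    have hl1 : l 1 = 0 := by
      have h' : l 1 * ((a : F) - 1) = 0 := by linear_combination e2 - e1
      rcases mul_eq_zero.mp h' with h | h
      · exact h
      · exact absurd (sub_eq_zero.mp h) haF
    have hl2 : l 2 = 0 := by
      have h' : l 2 * ((a : F) - 1) = 0 := by linear_combination e3 - e1
      rcases mul_eq_zero.mp h' with h | h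
      · exact h
      · exact absurd (sub_eq_zero.mp h) haF
    have hl0 : l 0 = 0 := by rw [hl1, hl2] at e1; simpa using e1
    funext i; fin_cases i <;> simpa
  have hCrange : { c : (Fin 2 → Fˣ) → F |
      ∃ l0 l1 l2 : F, c = fun t => l0 + l1 * (t 0 : F) + l2 * (t 1 : F) }
      = ↑(LinearMap.range L) := by
    ext c
    simp only [Set.mem_setOf_eq, SetLike.mem_coe, LinearMap.mem_range]
    constructor
    · rintro ⟨l0, l1, l2, rfl⟩
      exact ⟨![l0, l1, l2], by funext t; simp [L]⟩
    · rintro ⟨l, rfl⟩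
      exact ⟨l 0, l 1, l 2, rfl⟩
  refine ⟨?_, ?_, ?_⟩
  · rw [hCrange, Submodule.span_eq, LinearMap.finrank_range_of_inj hLinj,
      Module.finrank_fin_fun]
  · rintro c ⟨l0, l1, l2, rfl⟩ hne
    have hnz : ¬(l0 = 0 ∧ l1 = 0 ∧ l2 = 0) := by
      rintro ⟨rfl, rfl, rfl⟩
      exact hne (by funext t; simp)
    rw [aux_hammingNorm, aux_card_univ]
    exact Nat.sub_le_sub_left (aux_zeros_le l0 l1 l2 hnz) _
  · refine ⟨fun t => 0 + 1 * (t 0 : F) + (-1) * (t 1 : F), ⟨0, 1, -1, rfl⟩, ?_, ?_⟩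
    · intro h
      have h' := congrFun h (fun i => if i = 0 then a else 1)
      simp at h'
      exact haF (by linear_combination h')
    · rw [aux_hammingNorm, aux_card_univ]
      have hz : (Finset.univ.filter
          (fun t : Fin 2 → Fˣ => 0 + 1 * (t 0 : F) + (-1) * (t 1 : F) = 0)).card
          = Fintype.card F - 1 := by
        rw [← Fintype.card_units (α := F), ← Finset.card_univ (α := Fˣ)]
        refine Finset.card_bij (fun t _ => t 0) (fun _ _ => Finset.mem_univ _) ?_ ?_
        · intro t ht s hs h01
          have h00 : (t 0 : F) = (s 0 : F) := congrArg Units.val h01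
          simp only [Finset.mem_filter, Finset.mem_univ, true_and] at ht hs
          have h1 : t 1 = s 1 := by
            refine Units.ext ?_
            linear_combination -ht + hs + h00
          funext i; fin_cases i
          · exact h01
          · exact h1
        · intro b _
          refine ⟨fun _ => b, ?_, rfl⟩
          simp
      rw [hz]
end
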